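/- arXiv:1510.06957 — 2 statements merged into one kernel-verified Lean document; each statement's English description precedes it below -/
import Mathlib

section
/- The map d_T on (C × D)², defined by d_T((x,r),(y,r'))² = ‖r - r'‖² + sup{ |x(t+a) - y(t+b)|² : t ∈ [0,T], a,b ∈ [-τ̄,0], |b-a| ≤ K_τ ‖r - r'‖ }, is a metric on C × D. -/
open Set

variable {d : ℕ} {τb T Kτ : ℝ} {D : Set (EuclideanSpace ℝ (Fin d))}

/-- The delay-sup term of the distance `d_T` on `C([-τ̄,T],ℝ) × D`. -/
noncomputable def supTerm (τb T Kτ : ℝ) {d : ℕ} (D : Set (EuclideanSpace ℝ (Fin d)))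
    (p q : C(Icc (-τb) T, ℝ) × D) : ℝ :=
  sSup {v : ℝ | ∃ t a b : ℝ, ∃ (ht : t ∈ Icc (0 : ℝ) T) (ha : a ∈ Icc (-τb) (0 : ℝ))
    (hb : b ∈ Icc (-τb) (0 : ℝ)),
    |b - a| ≤ Kτ * ‖(p.2 : EuclideanSpace ℝ (Fin d)) - (q.2 : EuclideanSpace ℝ (Fin d))‖ ∧
    v = |p.1 ⟨t + a, ⟨by linarith [ht.1, ha.1], by linarith [ht.2, ha.2]⟩⟩ -
         q.1 ⟨t + b, ⟨by linarith [ht.1, hb.1], by linarith [ht.2, hb.2]⟩⟩| ^ 2}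

/-- The distance `d_T` on `C([-τ̄,T],ℝ) × D`. -/
noncomputable def dT (τb T Kτ : ℝ) {d : ℕ} (D : Set (EuclideanSpace ℝ (Fin d)))
    (p q : C(Icc (-τb) T, ℝ) × D) : ℝ :=
  Real.sqrt (‖(p.2 : EuclideanSpace ℝ (Fin d)) - (q.2 : EuclideanSpace ℝ (Fin d))‖ ^ 2 +
    supTerm τb T Kτ D p q)

/-- The underlying set of the delay-sup term. -/
def Sset (τb T Kτ : ℝ) {d : ℕ} (D : Set (EuclideanSpace ℝ (Fin d)))
    (p q : C(Icc (-τb) T, ℝ) × D) : Set ℝ :=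
  {v : ℝ | ∃ t a b : ℝ, ∃ (ht : t ∈ Icc (0 : ℝ) T) (ha : a ∈ Icc (-τb) (0 : ℝ))
    (hb : b ∈ Icc (-τb) (0 : ℝ)),
    |b - a| ≤ Kτ * ‖(p.2 : EuclideanSpace ℝ (Fin d)) - (q.2 : EuclideanSpace ℝ (Fin d))‖ ∧
    v = |p.1 ⟨t + a, ⟨by linarith [ht.1, ha.1], by linarith [ht.2, ha.2]⟩⟩ -
         q.1 ⟨t + b, ⟨by linarith [ht.1, hb.1], by linarith [ht.2, hb.2]⟩⟩| ^ 2}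

lemma supTerm_eq (p q : C(Icc (-τb) T, ℝ) × D) :
    supTerm τb T Kτ D p q = sSup (Sset τb T Kτ D p q) := rfl

lemma mem_Sset (p q : C(Icc (-τb) T, ℝ) × D) {t a b : ℝ}
    (ht : t ∈ Icc (0 : ℝ) T) (ha : a ∈ Icc (-τb) (0 : ℝ)) (hb : b ∈ Icc (-τb) (0 : ℝ))
    (hab : |b - a| ≤ Kτ * ‖(p.2 : EuclideanSpace ℝ (Fin d)) - (q.2 : EuclideanSpace ℝ (Fin d))‖)
    {s1 s2 : Icc (-τb) T} (hs1 : (s1 : ℝ) = t + a) (hs2 : (s2 : ℝ) = t + b) :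
    |p.1 s1 - q.1 s2| ^ 2 ∈ Sset τb T Kτ D p q := by
  obtain rfl : s1 = ⟨t + a, ⟨by linarith [ht.1, ha.1], by linarith [ht.2, ha.2]⟩⟩ :=
    Subtype.ext hs1
  obtain rfl : s2 = ⟨t + b, ⟨by linarith [ht.1, hb.1], by linarith [ht.2, hb.2]⟩⟩ :=
    Subtype.ext hs2
  exact ⟨t, a, b, ht, ha, hb, hab, rfl⟩

lemma abs_apply_le (x : C(Icc (-τb) T, ℝ)) (s : Icc (-τb) T) : |x s| ≤ ‖x‖ := by
  simpa using x.norm_coe_le_norm s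

lemma bddAbove_Sset (p q : C(Icc (-τb) T, ℝ) × D) :
    BddAbove (Sset τb T Kτ D p q) := by
  refine ⟨(‖p.1‖ + ‖q.1‖) ^ 2, ?_⟩
  rintro v ⟨t, a, b, ht, ha, hb, hab, rfl⟩
  exact pow_le_pow_left₀ (abs_nonneg _)
    ((abs_sub _ _).trans (add_le_add (abs_apply_le p.1 _) (abs_apply_le q.1 _))) 2

lemma Sset_nonneg (p q : C(Icc (-τb) T, ℝ) × D) :
    ∀ v ∈ Sset τb T Kτ D p q, 0 ≤ v := by
  rintro v ⟨t, a, b, ht, ha, hb, hab, rfl⟩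
  positivity

lemma supTerm_nonneg (p q : C(Icc (-τb) T, ℝ) × D) :
    0 ≤ supTerm τb T Kτ D p q :=
  Real.sSup_nonneg (Sset_nonneg p q)

lemma zero_mem_Sset (hτb : 0 ≤ τb) (hT : 0 ≤ T) (hK : 0 ≤ Kτ)
    (p q : C(Icc (-τb) T, ℝ) × D) :
    |p.1 ⟨0, ⟨by linarith, hT⟩⟩ - q.1 ⟨0, ⟨by linarith, hT⟩⟩| ^ 2 ∈ Sset τb T Kτ D p q := by
  refine mem_Sset p q (t := 0) (a := 0) (b := 0) ⟨le_refl 0, hT⟩ ⟨by linarith, le_refl 0⟩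
    ⟨by linarith, le_refl 0⟩ ?_ (by norm_num) (by norm_num)
  simp only [sub_zero, abs_zero]
  positivity

lemma Sset_symm (p q : C(Icc (-τb) T, ℝ) × D) :
    Sset τb T Kτ D p q = Sset τb T Kτ D q p := by
  ext v
  constructor <;> rintro ⟨t, a, b, ht, ha, hb, hab, rfl⟩ <;>
    exact ⟨t, b, a, ht, hb, ha, by rw [abs_sub_comm, norm_sub_rev]; exact hab,
      by rw [abs_sub_comm]⟩

/-- Euclidean (Minkowski) triangle inequality in the plane. -/
lemma sqrt_sq_add_sq_triangle (a1 b1 a2 b2 : ℝ) :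
    Real.sqrt ((a1 + a2) ^ 2 + (b1 + b2) ^ 2) ≤
      Real.sqrt (a1 ^ 2 + b1 ^ 2) + Real.sqrt (a2 ^ 2 + b2 ^ 2) := by
  set s1 := Real.sqrt (a1 ^ 2 + b1 ^ 2) with hs1
  set s2 := Real.sqrt (a2 ^ 2 + b2 ^ 2) with hs2
  have h1 : s1 ^ 2 = a1 ^ 2 + b1 ^ 2 := Real.sq_sqrt (by positivity)
  have h2 : s2 ^ 2 = a2 ^ 2 + b2 ^ 2 := Real.sq_sqrt (by positivity)
  have hn1 : 0 ≤ s1 := Real.sqrt_nonneg _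
  have hn2 : 0 ≤ s2 := Real.sqrt_nonneg _
  have key : (a1 + a2) ^ 2 + (b1 + b2) ^ 2 ≤ (s1 + s2) ^ 2 := by
    have hcs : a1 * a2 + b1 * b2 ≤ s1 * s2 := by
      nlinarith [sq_nonneg (a1 * b2 - a2 * b1), sq_nonneg (s1 * s2 - a1 * a2 - b1 * b2),
        mul_nonneg hn1 hn2]
    nlinarith
  calc Real.sqrt ((a1 + a2) ^ 2 + (b1 + b2) ^ 2) ≤ Real.sqrt ((s1 + s2) ^ 2) :=
        Real.sqrt_le_sqrt key
    _ = s1 + s2 := Real.sqrt_sq (by linarith)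

/-- `d_T` is a metric on `C([-τ̄,T],ℝ) × D`. -/
theorem dT_is_metric (hτb : 0 ≤ τb) (hT : 0 ≤ T) (hK : 0 ≤ Kτ) (hD : IsCompact D) :
    (∀ p q : C(Icc (-τb) T, ℝ) × D, 0 ≤ dT τb T Kτ D p q) ∧
    (∀ p q : C(Icc (-τb) T, ℝ) × D, dT τb T Kτ D p q = dT τb T Kτ D q p) ∧
    (∀ p q z : C(Icc (-τb) T, ℝ) × D,
      dT τb T Kτ D p z ≤ dT τb T Kτ D p q + dT τb T Kτ D q z) ∧
    (∀ p q : C(Icc (-τb) T, ℝ) × D, dT τb T Kτ D p q = 0 ↔ p = q) := by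
  refine ⟨fun p q => Real.sqrt_nonneg _, ?_, ?_, ?_⟩
  · -- symmetry
    intro p q
    unfold dT
    rw [supTerm_eq, supTerm_eq, Sset_symm, norm_sub_rev]
  · -- triangle inequality
    intro p q z
    unfold dT
    rw [supTerm_eq, supTerm_eq, supTerm_eq]
    set A1 := ‖(p.2 : EuclideanSpace ℝ (Fin d)) - (q.2 : EuclideanSpace ℝ (Fin d))‖ with hA1
    set A2 := ‖(q.2 : EuclideanSpace ℝ (Fin d)) - (z.2 : EuclideanSpace ℝ (Fin d))‖ with hA2
    set A := ‖(p.2 : EuclideanSpace ℝ (Fin d)) - (z.2 : EuclideanSpace ℝ (Fin d))‖ with hA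
    have hAle : A ≤ A1 + A2 := by
      rw [hA, hA1, hA2, ← sub_add_sub_cancel (p.2 : EuclideanSpace ℝ (Fin d)) (q.2 : _) (z.2 : _)]
      exact norm_add_le _ _
    set s1 := Real.sqrt (sSup (Sset τb T Kτ D p q)) with hs1
    set s2 := Real.sqrt (sSup (Sset τb T Kτ D q z)) with hs2
    have hn1 : 0 ≤ s1 := Real.sqrt_nonneg _
    have hn2 : 0 ≤ s2 := Real.sqrt_nonneg _
    have hsup1 : s1 ^ 2 = sSup (Sset τb T Kτ D p q) :=
      Real.sq_sqrt (Real.sSup_nonneg (Sset_nonneg p q))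
    have hsup2 : s2 ^ 2 = sSup (Sset τb T Kτ D q z) :=
      Real.sq_sqrt (Real.sSup_nonneg (Sset_nonneg q z))
    -- the key claim: the pz-sup is at most (s1 + s2)^2
    have hkey : sSup (Sset τb T Kτ D p z) ≤ (s1 + s2) ^ 2 := by
      refine Real.sSup_le ?_ (by positivity)
      rintro v ⟨t, a, b, ht, ha, hb, hab, rfl⟩
      -- choose the intermediate delay c by clamping b - a to [-Kτ*A1, Kτ*A1]
      set δ1 := Kτ * A1 with hδ1
      set δ2 := Kτ * A2 with hδ2
      have hδ1n : 0 ≤ δ1 := mul_nonneg hK (norm_nonneg _)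
      have hδ2n : 0 ≤ δ2 := mul_nonneg hK (norm_nonneg _)
      have habs : |b - a| ≤ δ1 + δ2 := by
        refine hab.trans ?_
        rw [hδ1, hδ2, ← mul_add]
        exact mul_le_mul_of_nonneg_left hAle hK
      set m := max (min (b - a) δ1) (-δ1) with hm
      set c := a + m with hc
      have hmabs : |m| ≤ δ1 := by
        rw [abs_le]
        constructor
        · exact le_max_right _ _
        · exact max_le ((min_le_right _ _)) (by linarith)
      have hca : |c - a| ≤ δ1 := by rw [hc]; simpa using hmabs
      have hcmem : c ∈ Icc (-τb) (0 : ℝ) := by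
        rcases le_total a b with hab' | hab'
        · have h0m : 0 ≤ m := le_trans (by simp [hδ1n, hab', sub_nonneg.mpr hab', le_min]) (le_max_left _ _)
          have hmb : m ≤ b - a := max_le (min_le_left _ _) (by linarith)
          exact ⟨by linarith [ha.1], by linarith [hb.2]⟩
        · have hmin : min (b - a) δ1 = b - a := min_eq_left (by linarith)
          have hbm : b - a ≤ m := by rw [hm, hmin]; exact le_max_left _ _
          have hm0 : m ≤ 0 := by
            rw [hm, hmin]
            exact max_le (by linarith) (by linarith)
          exact ⟨by linarith [hb.1], by linarith [ha.2]⟩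
      have hbc : |b - c| ≤ δ2 := by
        rw [hc, abs_le]
        rcases le_total (b - a) (-δ1) with h | h
        · have : m = -δ1 := by
            rw [hm, min_eq_left (by linarith)]
            exact max_eq_right h
          rw [this]
          rcases abs_le.mp habs with ⟨h1, h2⟩
          constructor <;> linarith
        · rcases le_total (b - a) δ1 with h' | h'
          · have : m = b - a := by
              rw [hm, min_eq_left h']
              exact max_eq_left h
            rw [this]
            constructor <;> linarith
          · have : m = δ1 := by
              rw [hm, min_eq_right h']
              exact max_eq_left (by linarith)
            rw [this]
            rcases abs_le.mp habs with ⟨h1, h2⟩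
            constructor <;> linarith
      -- the two intermediate memberships
      have hs1' : (⟨t + a, ⟨by linarith [ht.1, ha.1], by linarith [ht.2, ha.2]⟩⟩ : Icc (-τb) T) =
          (⟨t + a, _⟩ : Icc (-τb) T) := rfl
      have hmem1 : |p.1 ⟨t + a, ⟨by linarith [ht.1, ha.1], by linarith [ht.2, ha.2]⟩⟩ -
          q.1 ⟨t + c, ⟨by linarith [ht.1, hcmem.1], by linarith [ht.2, hcmem.2]⟩⟩| ^ 2 ∈
          Sset τb T Kτ D p q :=
        mem_Sset p q ht ha hcmem (by rwa [← hA1, ← hδ1]) rfl rfl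
      have hmem2 : |q.1 ⟨t + c, ⟨by linarith [ht.1, hcmem.1], by linarith [ht.2, hcmem.2]⟩⟩ -
          z.1 ⟨t + b, ⟨by linarith [ht.1, hb.1], by linarith [ht.2, hb.2]⟩⟩| ^ 2 ∈
          Sset τb T Kτ D q z :=
        mem_Sset q z ht hcmem hb (by rwa [← hA2, ← hδ2]) rfl rfl
      have hle1 : |p.1 ⟨t + a, ⟨by linarith [ht.1, ha.1], by linarith [ht.2, ha.2]⟩⟩ -
          q.1 ⟨t + c, ⟨by linarith [ht.1, hcmem.1], by linarith [ht.2, hcmem.2]⟩⟩| ≤ s1 := by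
        have h := le_csSup (bddAbove_Sset p q) hmem1
        calc |_ - _| = Real.sqrt (|_ - _| ^ 2) := (Real.sqrt_sq (abs_nonneg _)).symm
          _ ≤ s1 := Real.sqrt_le_sqrt h
      have hle2 : |q.1 ⟨t + c, ⟨by linarith [ht.1, hcmem.1], by linarith [ht.2, hcmem.2]⟩⟩ -
          z.1 ⟨t + b, ⟨by linarith [ht.1, hb.1], by linarith [ht.2, hb.2]⟩⟩| ≤ s2 := by
        have h := le_csSup (bddAbove_Sset q z) hmem2
        calc |_ - _| = Real.sqrt (|_ - _| ^ 2) := (Real.sqrt_sq (abs_nonneg _)).symm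
          _ ≤ s2 := Real.sqrt_le_sqrt h
      have htri : |p.1 ⟨t + a, ⟨by linarith [ht.1, ha.1], by linarith [ht.2, ha.2]⟩⟩ -
          z.1 ⟨t + b, ⟨by linarith [ht.1, hb.1], by linarith [ht.2, hb.2]⟩⟩| ≤ s1 + s2 := by
        refine le_trans ?_ (add_le_add hle1 hle2)
        exact abs_sub_le _ (q.1 ⟨t + c, ⟨by linarith [ht.1, hcmem.1],
          by linarith [ht.2, hcmem.2]⟩⟩) _
      exact pow_le_pow_left₀ (abs_nonneg _) htri 2
    -- assemble
    have hA0 : 0 ≤ A := norm_nonneg _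
    calc Real.sqrt (A ^ 2 + sSup (Sset τb T Kτ D p z))
        ≤ Real.sqrt ((A1 + A2) ^ 2 + (s1 + s2) ^ 2) := by
          refine Real.sqrt_le_sqrt (add_le_add ?_ hkey)
          exact pow_le_pow_left₀ hA0 hAle 2
      _ ≤ Real.sqrt (A1 ^ 2 + s1 ^ 2) + Real.sqrt (A2 ^ 2 + s2 ^ 2) :=
          sqrt_sq_add_sq_triangle A1 s1 A2 s2
      _ = _ := by rw [hsup1, hsup2]
  · -- identity of indiscernibles
    intro p q
    constructor
    · intro h
      have hWn : 0 ≤ ‖(p.2 : EuclideanSpace ℝ (Fin d)) - (q.2 : EuclideanSpace ℝ (Fin d))‖ ^ 2 +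
          supTerm τb T Kτ D p q := by
        have := supTerm_nonneg (τb := τb) (T := T) (Kτ := Kτ) p q
        positivity
      have hzero : ‖(p.2 : EuclideanSpace ℝ (Fin d)) - (q.2 : EuclideanSpace ℝ (Fin d))‖ ^ 2 +
          supTerm τb T Kτ D p q = 0 := by
        have := Real.sqrt_eq_zero hWn |>.mp h
        exact this
      have hnorm0 : ‖(p.2 : EuclideanSpace ℝ (Fin d)) - (q.2 : EuclideanSpace ℝ (Fin d))‖ = 0 := by
        have h1 : (0:ℝ) ≤ ‖(p.2 : EuclideanSpace ℝ (Fin d)) - (q.2 : EuclideanSpace ℝ (Fin d))‖ ^ 2 :=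
          sq_nonneg _
        have h2 := supTerm_nonneg (τb := τb) (T := T) (Kτ := Kτ) p q
        have : ‖(p.2 : EuclideanSpace ℝ (Fin d)) - (q.2 : EuclideanSpace ℝ (Fin d))‖ ^ 2 = 0 := by
          linarith
        exact pow_eq_zero_iff (by norm_num) |>.mp this
      have hsup0 : supTerm τb T Kτ D p q = 0 := by
        have h1 : (0:ℝ) ≤ ‖(p.2 : EuclideanSpace ℝ (Fin d)) - (q.2 : EuclideanSpace ℝ (Fin d))‖ ^ 2 :=
          sq_nonneg _
        have h2 := supTerm_nonneg (τb := τb) (T := T) (Kτ := Kτ) p q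
        linarith
      have h2eq : p.2 = q.2 := by
        apply Subtype.ext
        rwa [norm_sub_eq_zero_iff] at hnorm0
      have h1eq : p.1 = q.1 := by
        ext s
        obtain ⟨hs1, hs2⟩ := s.2
        have hta : (s : ℝ) = max (s : ℝ) 0 + min (s : ℝ) 0 := by
          rcases le_total (s : ℝ) 0 with hle | hle
          · rw [max_eq_right hle, min_eq_left hle, zero_add]
          · rw [max_eq_left hle, min_eq_right hle, add_zero]
        have hmem : |p.1 s - q.1 s| ^ 2 ∈ Sset τb T Kτ D p q := by
          refine mem_Sset p q (t := max (s : ℝ) 0) (a := min (s : ℝ) 0) (b := min (s : ℝ) 0)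
            ⟨le_max_right _ _, max_le hs2 hT⟩ ⟨le_min hs1 (by linarith), min_le_right _ _⟩
            ⟨le_min hs1 (by linarith), min_le_right _ _⟩ ?_ hta hta
          simp only [sub_self, abs_zero]
          positivity
        have hle := le_csSup (bddAbove_Sset p q) hmem
        rw [supTerm_eq] at hsup0
        rw [hsup0] at hle
        have : |p.1 s - q.1 s| ^ 2 = 0 := le_antisymm hle (by positivity)
        have := pow_eq_zero_iff (n := 2) (by norm_num) |>.mp this
        have := abs_eq_zero.mp this
        linarith [sub_eq_zero.mp this, le_of_eq (sub_eq_zero.mp this)]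
      exact Prod.ext h1eq h2eq
    · rintro rfl
      unfold dT
      rw [sub_self, norm_zero]
      have hsup0 : supTerm τb T Kτ D p p = 0 := by
        rw [supTerm_eq]
        apply le_antisymm
        · refine Real.sSup_le ?_ le_rfl
          rintro v ⟨t, a, b, ht, ha, hb, hab, rfl⟩
          have hab0 : a = b := by
            rw [sub_self, norm_zero, mul_zero] at hab
            have := abs_nonneg (b - a)
            have : |b - a| = 0 := le_antisymm hab this
            have := abs_eq_zero.mp this
            linarith [sub_eq_zero.mp this]
          subst hab0
          simp
        · refine le_csSup (bddAbove_Sset p p) ?_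
          have h := zero_mem_Sset hτb hT hK p p
          simpa using h
      rw [hsup0]
      simp
end

section
/- Let S : ℝ → [0,1] be K_S-Lipschitz, σ : D² → ℝ bounded by ‖σ‖_∞ and K_σ-Lipschitz in its second variable, τ : D² → [0,τ̄] K_τ-Lipschitz in its second variable. Then for all r, r', r̃' ∈ D, x, y ∈ C, and t ∈ [0,T]: (σ(r,r') S(x(t-τ(r,r'))) - σ(r,r̃') S(y(t-τ(r,r̃'))))² ≤ 2(K_σ² + ‖σ‖_∞² K_S²) · d_t((x,r'),(y,r̃'))², where d_t is the restriction of d_T to paths on [-τ̄,t]. -/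
open Set NNReal

variable {d : ℕ} {τb T Kτ : ℝ} {D : Set (EuclideanSpace ℝ (Fin d))}

/-- The delay-sup term of the truncated distance `d_t` on `C([-τ̄,T],ℝ) × D`
(paths compared on `[-τ̄, t]` only). -/
noncomputable def supTermt (τb T Kτ t : ℝ) {d : ℕ} (D : Set (EuclideanSpace ℝ (Fin d)))
    (p q : C(Icc (-τb) T, ℝ) × D) : ℝ :=
  sSup {v : ℝ | ∃ s a b : ℝ, ∃ (hs : s ∈ Icc (0 : ℝ) (min t T))
    (ha : a ∈ Icc (-τb) (0 : ℝ)) (hb : b ∈ Icc (-τb) (0 : ℝ)),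
    |b - a| ≤ Kτ * ‖(p.2 : EuclideanSpace ℝ (Fin d)) - (q.2 : EuclideanSpace ℝ (Fin d))‖ ∧
    v = |p.1 ⟨s + a, ⟨by linarith [hs.1, ha.1], by
            have := min_le_right t T; linarith [hs.2, ha.2]⟩⟩ -
         q.1 ⟨s + b, ⟨by linarith [hs.1, hb.1], by
            have := min_le_right t T; linarith [hs.2, hb.2]⟩⟩| ^ 2}

/-- The truncated distance `d_t` on `C([-τ̄,T],ℝ) × D`. -/
noncomputable def dt (τb T Kτ t : ℝ) {d : ℕ} (D : Set (EuclideanSpace ℝ (Fin d)))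
    (p q : C(Icc (-τb) T, ℝ) × D) : ℝ :=
  Real.sqrt (‖(p.2 : EuclideanSpace ℝ (Fin d)) - (q.2 : EuclideanSpace ℝ (Fin d))‖ ^ 2 +
    supTermt τb T Kτ t D p q)

/-- pointwise Lipschitz estimate for the interaction kernel:
`(σ(r,r')S(x(t-τ(r,r'))) - σ(r,rt)S(y(t-τ(r,rt))))² ≤ 2(K_σ² + ‖σ‖_∞² K_S²) d_t((x,r'),(y,rt))²`. -/
theorem interaction_kernel_estimate
    (hτb : 0 ≤ τb) (hT : 0 ≤ T) (hK : 0 ≤ Kτ) (hD : IsCompact D)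
    (S : ℝ → ℝ) (KS : ℝ≥0) (hS : LipschitzWith KS S) (hSrange : ∀ u, S u ∈ Icc (0:ℝ) 1)
    (σ : D → D → ℝ) (σsup Kσ : ℝ) (hσbdd : ∀ r r', |σ r r'| ≤ σsup)
    (hσlip : ∀ r r' r'', |σ r r' - σ r r''|
      ≤ Kσ * ‖(r' : EuclideanSpace ℝ (Fin d)) - (r'' : EuclideanSpace ℝ (Fin d))‖)
    (τ : D → D → ℝ) (hτrange : ∀ r r', τ r r' ∈ Icc (0:ℝ) τb)
    (hτlip : ∀ r r' r'', |τ r r' - τ r r''|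
      ≤ Kτ * ‖(r' : EuclideanSpace ℝ (Fin d)) - (r'' : EuclideanSpace ℝ (Fin d))‖)
    (r r' rt : D) (x y : C(Icc (-τb) T, ℝ)) (t : ℝ) (ht : t ∈ Icc (0:ℝ) T) :
    (σ r r' * S (x ⟨t - τ r r',
        ⟨by linarith [ht.1, (hτrange r r').2], by linarith [ht.2, (hτrange r r').1]⟩⟩) -
     σ r rt * S (y ⟨t - τ r rt,
        ⟨by linarith [ht.1, (hτrange r rt).2], by linarith [ht.2, (hτrange r rt).1]⟩⟩)) ^ 2
      ≤ 2 * (Kσ ^ 2 + σsup ^ 2 * (KS : ℝ) ^ 2) * (dt τb T Kτ t D (x, r') (y, rt)) ^ 2 := by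
  obtain ⟨ht0, htT⟩ := ht
  have hτ1 := hτrange r r'
  have hτ2 := hτrange r rt
  set Δ : ℝ := ‖(r' : EuclideanSpace ℝ (Fin d)) - (rt : EuclideanSpace ℝ (Fin d))‖ with hΔdef
  have hΔ0 : (0:ℝ) ≤ Δ := norm_nonneg _
  set X : ℝ := x ⟨t - τ r r', ⟨by linarith [hτ1.2], by linarith [hτ1.1]⟩⟩ with hXdef
  set Y : ℝ := y ⟨t - τ r rt, ⟨by linarith [hτ2.2], by linarith [hτ2.1]⟩⟩ with hYdef
  set V : Set ℝ := {v : ℝ | ∃ s a b : ℝ, ∃ (hs : s ∈ Icc (0 : ℝ) (min t T))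
    (ha : a ∈ Icc (-τb) (0 : ℝ)) (hb : b ∈ Icc (-τb) (0 : ℝ)),
    |b - a| ≤ Kτ * Δ ∧
    v = |x ⟨s + a, ⟨by linarith [hs.1, ha.1], by
            have := min_le_right t T; linarith [hs.2, ha.2]⟩⟩ -
         y ⟨s + b, ⟨by linarith [hs.1, hb.1], by
            have := min_le_right t T; linarith [hs.2, hb.2]⟩⟩| ^ 2} with hVdef
  have hsup : supTermt τb T Kτ t D (x, r') (y, rt) = sSup V := rfl
  -- V is bounded above
  have hbdd : BddAbove V := by
    refine ⟨(‖x‖ + ‖y‖) ^ 2, ?_⟩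
    rintro v ⟨s, a, b, hs, ha, hb, -, rfl⟩
    exact pow_le_pow_left₀ (abs_nonneg _)
      ((abs_sub _ _).trans (add_le_add (x.norm_coe_le_norm _) (y.norm_coe_le_norm _))) 2
  -- membership of the key element
  have hmin : min t T = t := min_eq_left htT
  have hEmem : |X - Y| ^ 2 ∈ V := by
    refine ⟨t, -(τ r r'), -(τ r rt), ⟨ht0, by rw [hmin]⟩,
      ⟨by linarith [hτ1.2], by linarith [hτ1.1]⟩,
      ⟨by linarith [hτ2.2], by linarith [hτ2.1]⟩, ?_, ?_⟩
    · have heq : -(τ r rt) - -(τ r r') = τ r r' - τ r rt := by ring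
      rw [heq]; exact hτlip r r' rt
    · congr 2 <;> exact Subtype.ext (by simp [sub_eq_add_neg])
  have hEle : |X - Y| ^ 2 ≤ sSup V := le_csSup hbdd hEmem
  have hsup0 : (0:ℝ) ≤ sSup V := le_trans (sq_nonneg _) hEle
  -- dt squared
  have hdt : (dt τb T Kτ t D (x, r') (y, rt)) ^ 2 = Δ ^ 2 + sSup V := by
    rw [dt, hsup, Real.sq_sqrt (by positivity)]
  rw [hdt]
  clear_value X Y
  clear hXdef hYdef hEmem hVdef hsup hbdd hmin
  generalize hM : sSup V = M at hEle hsup0 ⊢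
  clear_value V
  clear hM hdt V
  -- basic bounds
  have hσ1 : |σ r r' - σ r rt| ≤ Kσ * Δ := hσlip r r' rt
  have hσ2 : |σ r rt| ≤ σsup := hσbdd r rt
  have hσsup0 : (0:ℝ) ≤ σsup := le_trans (abs_nonneg _) hσ2
  have hKS0 : (0:ℝ) ≤ (KS:ℝ) := KS.coe_nonneg
  have hSlip : |S X - S Y| ≤ (KS:ℝ) * |X - Y| := by
    have := hS.dist_le_mul X Y
    simpa [Real.dist_eq] using this
  have hU := hSrange X
  have hVr := hSrange Y
  have hA : (σ r r' - σ r rt) ^ 2 ≤ (Kσ * Δ) ^ 2 := by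
    rw [← sq_abs]; exact pow_le_pow_left₀ (abs_nonneg _) hσ1 2
  have hB : (σ r rt) ^ 2 ≤ σsup ^ 2 := by
    rw [← sq_abs]; exact pow_le_pow_left₀ (abs_nonneg _) hσ2 2
  have hC : (S X - S Y) ^ 2 ≤ (KS:ℝ) ^ 2 * |X - Y| ^ 2 := by
    have : (S X - S Y) ^ 2 ≤ ((KS:ℝ) * |X - Y|) ^ 2 := by
      rw [← sq_abs]; exact pow_le_pow_left₀ (abs_nonneg _) hSlip 2
    calc (S X - S Y) ^ 2 ≤ ((KS:ℝ) * |X - Y|) ^ 2 := this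
      _ = (KS:ℝ) ^ 2 * |X - Y| ^ 2 := by ring
  have hU2 : (S X) ^ 2 ≤ 1 := by nlinarith [hU.1, hU.2]
  -- combine
  have key : (σ r r' * S X - σ r rt * S Y) ^ 2
      ≤ 2 * (σ r r' - σ r rt) ^ 2 * (S X) ^ 2 + 2 * (σ r rt) ^ 2 * (S X - S Y) ^ 2 := by
    nlinarith [sq_nonneg ((σ r r' - σ r rt) * S X - σ r rt * (S X - S Y))]
  have step1 : (σ r r' - σ r rt) ^ 2 * (S X) ^ 2 ≤ (Kσ * Δ) ^ 2 * 1 :=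
    mul_le_mul hA hU2 (sq_nonneg _) (sq_nonneg _)
  have step2 : (σ r rt) ^ 2 * (S X - S Y) ^ 2 ≤ σsup ^ 2 * ((KS:ℝ) ^ 2 * |X - Y| ^ 2) :=
    mul_le_mul hB hC (sq_nonneg _) (sq_nonneg _)
  have step3 : σsup ^ 2 * (KS:ℝ) ^ 2 * |X - Y| ^ 2 ≤ σsup ^ 2 * (KS:ℝ) ^ 2 * M :=
    mul_le_mul_of_nonneg_left hEle (by positivity)
  nlinarith [key, step1, step2, step3, mul_nonneg (sq_nonneg Kσ) hsup0,
    mul_nonneg (mul_nonneg (sq_nonneg σsup) (sq_nonneg ((KS:ℝ)))) (sq_nonneg Δ)]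
end
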